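/- arXiv:2402.18327 — 3 statements merged into one kernel-verified Lean document; each statement's English description precedes it below -/
import Mathlib

section
/- Let (X,d) be a metric space, x,y ∈ X, and A ⊆ X a closed path-separating set between x and y. Then for every t ∈ [0, width_{x,y}(A)], the set {z ∈ A : pos_A(z) = t} is a path-separating set between x and y. -/
open MeasureTheory Metric Set Filter
open scoped ENNReal NNReal

noncomputable section

/-- A rectifiable curve from `x` to `y`, encoded via a `1`-Lipschitz
(arclength-type) parametrization on `[0, T]`. -/
structure RectCurve (X : Type*) [MetricSpace X] (x y : X) where
  T : ℝ
  T_nonneg : 0 ≤ T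
  toFun : ℝ → X
  lip : LipschitzOnWith 1 toFun (Set.Icc 0 T)
  source : toFun 0 = x
  target : toFun T = y

/-- Length spent by the curve inside `A` up to time `s`. -/
def RectCurve.lengthInUpTo {X : Type*} [MetricSpace X] {x y : X}
    (c : RectCurve X x y) (A : Set X) (s : ℝ) : ℝ≥0∞ :=
  volume {t : ℝ | t ∈ Set.Icc 0 (min s c.T) ∧ c.toFun t ∈ A}

/-- Total length spent by the curve inside `A`. -/
def RectCurve.lengthIn {X : Type*} [MetricSpace X] {x y : X}
    (c : RectCurve X x y) (A : Set X) : ℝ≥0∞ :=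
  c.lengthInUpTo A c.T

/-- Length of the curve. -/
def RectCurve.length {X : Type*} [MetricSpace X] {x y : X}
    (c : RectCurve X x y) : ℝ≥0∞ :=
  eVariationOn c.toFun (Set.Icc 0 c.T)

/-- The width of `A` with respect to `x, y`: infimum over rectifiable curves
from `x` to `y` of the length spent inside `A` (`∞` if there is no such curve). -/
def width {X : Type*} [MetricSpace X] (x y : X) (A : Set X) : ℝ≥0∞ :=
  ⨅ c : RectCurve X x y, c.lengthIn A

/-- The position function of the set `A` with respect to `x, y`. -/
def posFn {X : Type*} [MetricSpace X] (x y : X) (A : Set X) (z : X) : ℝ≥0∞ :=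
  ⨅ (c : RectCurve X x y) (s : ℝ) (_ : s ∈ Set.Icc 0 c.T) (_ : c.toFun s = z),
    c.lengthInUpTo A s

/-- Topological separating set from `x` to `y`. -/
def IsSepSet {X : Type*} [MetricSpace X] (x y : X) (Ω : Set X) : Prop :=
  IsClosed Ω ∧ ∃ r > 0, Metric.ball x r ⊆ interior Ω ∧ Metric.ball y r ⊆ Ωᶜ

/-- Path-separating set between `x` and `y`: every rectifiable curve from `x`
to `y` meets `A`. -/
def IsPathSep {X : Type*} [MetricSpace X] (x y : X) (A : Set X) : Prop :=
  ∀ c : RectCurve X x y, ∃ t ∈ Set.Icc 0 c.T, c.toFun t ∈ A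

/-- Minkowski content of `Ω` with respect to `μ`. -/
def mink {X : Type*} [MetricSpace X] [MeasurableSpace X] (μ : Measure X) (Ω : Set X) : ℝ≥0∞ :=
  Filter.liminf (fun r : ℝ => μ (Metric.cthickening r Ω \ Ω) / ENNReal.ofReal r)
    (nhdsWithin 0 (Set.Ioi 0))

/-- The Riesz density with poles at `x` and `y` (it vanishes at the poles). -/
def rieszDensity {X : Type*} [MetricSpace X] [MeasurableSpace X] (m : Measure X) (x y : X) (z : X) : ℝ≥0∞ :=
  ENNReal.ofReal (dist x z) / m (Metric.ball x (dist x z))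
    + ENNReal.ofReal (dist y z) / m (Metric.ball y (dist y z))

/-- The `L`-truncated Riesz measure `m_{x,y}^L`. -/
def rieszMeasure {X : Type*} [MetricSpace X] [MeasurableSpace X] (m : Measure X) (x y : X) (L : ℝ) :
    Measure X :=
  m.withDensity
    ((Metric.ball x (2 * L * dist x y) ∪ Metric.ball y (2 * L * dist x y)).indicator
      (rieszDensity m x y))

/-- The local Lipschitz constant `lip u (z)` (with value `0` at isolated points,
since the limsup along the empty filter is `⊥`). -/
def lipConst {X : Type*} [MetricSpace X] (u : X → ℝ) (z : X) : ℝ≥0∞ :=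
  Filter.limsup (fun w => ENNReal.ofReal (|u w - u z| / dist w z))
    (nhdsWithin z {z}ᶜ)

/-- `m` is `C`-doubling. -/
def IsDoubling {X : Type*} [MetricSpace X] [MeasurableSpace X] (m : Measure X) (C : ℝ≥0) : Prop :=
  ∀ (z : X) (r : ℝ), 0 < r → m (Metric.ball z (2 * r)) ≤ C * m (Metric.ball z r)

/-- The separating ratio `m(A)/width_{x,y}(A)`, with the conventions that it is
`∞` when the width vanishes and `0` when the width is infinite. -/
def sepRatio {X : Type*} [MetricSpace X] [MeasurableSpace X] (m : Measure X) (x y : X) (A : Set X) : ℝ≥0∞ :=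
  if width x y A = 0 then ⊤ else m A / width x y A

/-- The support of the measure `m`. -/
def msupport {X : Type*} [MetricSpace X] [MeasurableSpace X] (m : Measure X) : Set X :=
  {z | ∀ r > 0, 0 < m (Metric.ball z r)}

/-- Line integral of a nonnegative density along a rectifiable curve
(in its `1`-Lipschitz parametrization). -/
def lineIntegral {X : Type*} [MetricSpace X] {x y : X}
    (c : RectCurve X x y) (ρ : X → ℝ≥0∞) : ℝ≥0∞ :=
  ∫⁻ t in Set.Icc (0 : ℝ) c.T, ρ (c.toFun t)

/-- Admissible densities for a family of curves. -/
def Adm {X : Type*} [MetricSpace X] [MeasurableSpace X] {x y : X} (Γ : Set (RectCurve X x y)) :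
    Set (X → ℝ≥0∞) :=
  {ρ | Measurable ρ ∧ ∀ c ∈ Γ, 1 ≤ lineIntegral c ρ}

/-- The `p`-modulus of a family of curves with respect to the measure `ν`. -/
def Modulus {X : Type*} [MetricSpace X] [MeasurableSpace X] {x y : X} (p : ℝ)
    (Γ : Set (RectCurve X x y)) (ν : Measure X) : ℝ≥0∞ :=
  ⨅ ρ ∈ Adm Γ, ∫⁻ z, ρ z ^ p ∂ν

end

/-!
A rectifiable curve from `x` to `y` that has already spent length `posFn z` in `A` when it
reaches `z = γ(s)` can follow `γ` from `s` on; hence `s ↦ posFn (γ s)` increases no faster than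
the length `γ` spends in `A`, and at the last point of `γ` in `A` it is at least the width of `A`.
A continuity argument along the closed set of times at which `γ` lies in `A` then produces a
point where the position equals any prescribed `t ≤ width A`.
-/

section Lipschitz

variable {Y : Type*} [PseudoMetricSpace Y]

theorem LipschitzOnWith.Icc_union_Icc {f : ℝ → Y} {K : ℝ≥0} {a b c : ℝ}
    (h₁ : LipschitzOnWith K f (Icc a b)) (h₂ : LipschitzOnWith K f (Icc b c)) :
    LipschitzOnWith K f (Icc a b ∪ Icc b c) := by
  have mixed : ∀ u ∈ Icc a b, ∀ v ∈ Icc b c, dist (f u) (f v) ≤ K * dist u v := by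
    intro u hu v hv
    have hb₁ : b ∈ Icc a b := ⟨hu.1.trans hu.2, le_rfl⟩
    have hb₂ : b ∈ Icc b c := ⟨le_rfl, hv.1.trans hv.2⟩
    calc dist (f u) (f v) ≤ dist (f u) (f b) + dist (f b) (f v) := dist_triangle _ _ _
      _ ≤ K * dist u b + K * dist b v :=
        add_le_add (h₁.dist_le_mul u hu b hb₁) (h₂.dist_le_mul b hb₂ v hv)
      _ = K * dist u v := by
        simp only [Real.dist_eq, abs_of_nonpos (sub_nonpos.2 hu.2),
          abs_of_nonpos (sub_nonpos.2 hv.1), abs_of_nonpos (sub_nonpos.2 (hu.2.trans hv.1))]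
        ring
  rw [lipschitzOnWith_iff_dist_le_mul]
  rintro u (hu | hu) v (hv | hv)
  · exact h₁.dist_le_mul u hu v hv
  · exact mixed u hu v hv
  · rw [dist_comm, dist_comm u]
    exact mixed v hv u hu
  · exact h₂.dist_le_mul u hu v hv

theorem LipschitzOnWith.ite_le {f g : ℝ → Y} {K : ℝ≥0} {a b c : ℝ} (hab : a ≤ b) (hbc : b ≤ c)
    (hf : LipschitzOnWith K f (Icc a b)) (hg : LipschitzOnWith K g (Icc b c)) (hfg : f b = g b) :
    LipschitzOnWith K (fun u => if u ≤ b then f u else g u) (Icc a c) := by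
  set h := fun u => if u ≤ b then f u else g u
  have hf' : ∀ u ∈ Icc a b, h u = f u := fun u hu => if_pos hu.2
  have hg' : ∀ u ∈ Icc b c, h u = g u := by
    intro u hu
    rcases hu.1.eq_or_lt with rfl | hlt
    · exact (if_pos le_rfl).trans hfg
    · exact if_neg (not_le.2 hlt)
  have h₁ : LipschitzOnWith K h (Icc a b) := fun u hu v hv => by
    rw [hf' u hu, hf' v hv]
    exact hf hu hv
  have h₂ : LipschitzOnWith K h (Icc b c) := fun u hu v hv => by
    rw [hg' u hu, hg' v hv]
    exact hg hu hv
  rw [← Icc_union_Icc_eq_Icc hab hbc]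
  exact h₁.Icc_union_Icc h₂

end Lipschitz

section GrowthBoundedByVolume

variable {K : Set ℝ} {f : ℝ → ℝ≥0∞} {a b : ℝ} {t : ℝ≥0∞}
  (hf : ∀ s s', a ≤ s → s ≤ s' → s' ≤ b → f s' ≤ f s + volume (Icc s s' ∩ K))
include hf

theorem apply_le_apply_add_ofReal {s s' : ℝ} (has : a ≤ s) (hss' : s ≤ s') (hs'b : s' ≤ b) :
    f s' ≤ f s + ENNReal.ofReal (s' - s) :=
  (hf s s' has hss' hs'b).trans <| by
    gcongr
    exact (measure_mono inter_subset_left).trans_eq Real.volume_Icc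

theorem le_apply_csInf_of_le_add_volume {S : Set ℝ} (hSne : S.Nonempty) (hSab : S ⊆ Icc a b)
    (hSt : ∀ u ∈ S, t ≤ f u) : t ≤ f (sInf S) := by
  have hSbdd : BddBelow S := ⟨a, fun u hu => (hSab hu).1⟩
  have has₀ : a ≤ sInf S := le_csInf hSne fun u hu => (hSab hu).1
  refine ENNReal.le_of_forall_pos_le_add fun ε hε _ => ?_
  obtain ⟨u, huS, hu⟩ := exists_lt_of_csInf_lt hSne (lt_add_of_pos_right _ (NNReal.coe_pos.2 hε))
  calc t ≤ f u := hSt u huS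
    _ ≤ f (sInf S) + ENNReal.ofReal (u - sInf S) :=
      apply_le_apply_add_ofReal hf has₀ (csInf_le hSbdd huS) (hSab huS).2
    _ ≤ f (sInf S) + ε := by
      rw [← ENNReal.ofReal_coe_nnreal]
      gcongr
      linarith

/-- Below the supremum `p` of the points of `K ∪ {a}` before `s₀`, `f` is at most `t`; between
`p` and `s₀` the set `K` is negligible, so `f` does not grow there. -/
theorem apply_le_of_le_add_volume (hKab : K ⊆ Icc a b) {s₀ : ℝ} (hs₀ : s₀ ∈ Icc a b)
    (ha : f a ≤ t) (hlt : ∀ u ∈ K, u < s₀ → f u ≤ t) : f s₀ ≤ t := by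
  set L := insert a {u ∈ K | u < s₀}
  have hL : ∀ u ∈ L, a ≤ u ∧ u ≤ s₀ ∧ f u ≤ t := by
    rintro u (rfl | ⟨huK, hu⟩)
    · exact ⟨le_rfl, hs₀.1, ha⟩
    · exact ⟨(hKab huK).1, hu.le, hlt u huK hu⟩
  have hLne : L.Nonempty := insert_nonempty _ _
  have hLbdd : BddAbove L := ⟨s₀, fun u hu => (hL u hu).2.1⟩
  set p := sSup L
  have hp : p ≤ s₀ := csSup_le hLne fun u hu => (hL u hu).2.1
  have hgap : volume (Icc p s₀ ∩ K) = 0 := by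
    refine measure_mono_null (fun v ⟨⟨hpv, hvs₀⟩, hvK⟩ => ?_)
      ((toFinite {p, s₀}).measure_zero volume)
    rcases hvs₀.lt_or_eq with hlt | rfl
    · exact .inl (le_antisymm (le_csSup hLbdd (.inr ⟨hvK, hlt⟩)) hpv)
    · exact .inr rfl
  refine ENNReal.le_of_forall_pos_le_add fun ε hε _ => ?_
  obtain ⟨u, huL, hu⟩ := exists_lt_of_lt_csSup hLne (sub_lt_self p (NNReal.coe_pos.2 hε))
  obtain ⟨hau, hus₀, hfu⟩ := hL u huL
  have hup : u ≤ p := le_csSup hLbdd huL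
  calc f s₀ ≤ f u + volume (Icc u s₀ ∩ K) := hf u s₀ hau hus₀ hs₀.2
    _ ≤ t + (volume (Icc u p) + volume (Icc p s₀ ∩ K)) := by
      gcongr
      rw [← Icc_union_Icc_eq_Icc hup hp, union_inter_distrib_right]
      exact (measure_union_le _ _).trans (add_le_add_left (measure_mono inter_subset_left) _)
    _ ≤ t + ε := by
      rw [hgap, add_zero, Real.volume_Icc, ← ENNReal.ofReal_coe_nnreal]
      gcongr
      linarith

theorem exists_mem_eq_of_le_add_volume (hK : IsClosed K) (hKab : K ⊆ Icc a b) (ha : f a ≤ t)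
    (hb : ∃ s ∈ K, t ≤ f s) : ∃ s ∈ K, f s = t := by
  set S := {u ∈ K | t ≤ f u}
  have hSne : S.Nonempty := hb
  have hSbdd : BddBelow S := ⟨a, fun u hu => (hKab hu.1).1⟩
  have hs₀K : sInf S ∈ K :=
    hK.closure_subset (closure_mono (sep_subset _ _) (csInf_mem_closure hSne hSbdd))
  refine ⟨sInf S, hs₀K, le_antisymm ?_ ?_⟩
  · refine apply_le_of_le_add_volume hf hKab (hKab hs₀K) ha fun u huK hu => ?_
    exact (not_le.1 fun h => hu.not_ge (csInf_le hSbdd ⟨huK, h⟩)).le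
  · exact le_apply_csInf_of_le_add_volume hf hSne (fun u hu => hKab hu.1) fun u hu => hu.2

end GrowthBoundedByVolume

namespace RectCurve

variable {X : Type*} [MetricSpace X] {x y : X}

theorem isClosed_inter_preimage (c : RectCurve X x y) {A : Set X} (hA : IsClosed A) :
    IsClosed (Icc 0 c.T ∩ c.toFun ⁻¹' A) :=
  c.lip.continuousOn.preimage_isClosed_of_isClosed isClosed_Icc hA

noncomputable def glue (c' c : RectCurve X x y) {σ s : ℝ} (hσ : σ ∈ Icc 0 c'.T)
    (hs : s ∈ Icc 0 c.T) (heq : c'.toFun σ = c.toFun s) : RectCurve X x y where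
  T := σ + (c.T - s)
  T_nonneg := by linarith [hσ.1, hs.2]
  toFun u := if u ≤ σ then c'.toFun u else c.toFun (u + (s - σ))
  lip := by
    refine LipschitzOnWith.ite_le hσ.1 (by linarith [hs.2])
      (c'.lip.mono (Icc_subset_Icc_right hσ.2)) ?_ (by rw [heq, add_sub_cancel])
    have hmaps : MapsTo (· + (s - σ)) (Icc σ (σ + (c.T - s))) (Icc 0 c.T) := fun u hu =>
      ⟨by linarith [hu.1, hs.1], by linarith [hu.2]⟩
    have h := c.lip.comp (isometry_add_right (s - σ)).lipschitz.lipschitzOnWith hmaps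
    rw [one_mul] at h
    exact h
  source := by rw [if_pos hσ.1, c'.source]
  target := by
    split_ifs with h
    · rw [show σ + (c.T - s) = σ by linarith [hs.2], heq,
        show s = c.T by linarith [hs.2], c.target]
    · rw [show σ + (c.T - s) + (s - σ) = c.T by ring, c.target]

section Glue

variable {c' c : RectCurve X x y} {σ s s' : ℝ} (hσ : σ ∈ Icc 0 c'.T) (hs : s ∈ Icc 0 c.T)
  (heq : c'.toFun σ = c.toFun s)

theorem glue_apply_add_sub (hss' : s ≤ s') :
    (c'.glue c hσ hs heq).toFun (σ + (s' - s)) = c.toFun s' := by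
  rcases hss'.eq_or_lt with rfl | hlt
  · simp [glue, heq]
  · simp only [glue, if_neg (show ¬σ + (s' - s) ≤ σ by linarith)]
    congr 1
    ring

theorem lengthInUpTo_glue_le (A : Set X) (hs'T : s' ≤ c.T) :
    (c'.glue c hσ hs heq).lengthInUpTo A (σ + (s' - s))
      ≤ c'.lengthInUpTo A σ + volume (Icc s s' ∩ c.toFun ⁻¹' A) := by
  have hsub : {u | u ∈ Icc 0 (σ + (s' - s)) ∧ (c'.glue c hσ hs heq).toFun u ∈ A}
      ⊆ {u | u ∈ Icc 0 σ ∧ c'.toFun u ∈ A} ∪ (· + (s - σ)) ⁻¹' (Icc s s' ∩ c.toFun ⁻¹' A) := by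
    rintro u ⟨⟨hu0, hu⟩, huA⟩
    by_cases huσ : u ≤ σ
    · left
      exact ⟨⟨hu0, huσ⟩, by simpa [glue, huσ] using huA⟩
    · right
      exact ⟨⟨by linarith, by linarith⟩, by simpa [glue, huσ] using huA⟩
  rw [lengthInUpTo, lengthInUpTo, glue, min_eq_left (by linarith), min_eq_left hσ.2]
  calc _ ≤ _ := measure_mono hsub
    _ ≤ _ := measure_union_le _ _
    _ = _ := by rw [measure_preimage_add_right]

end Glue

variable {s s' : ℝ}

theorem lengthInUpTo_zero (c : RectCurve X x y) (A : Set X) : c.lengthInUpTo A 0 = 0 := by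
  refine measure_mono_null (fun u hu => ?_) (Real.volume_singleton (a := 0))
  rw [min_eq_left c.T_nonneg] at hu
  exact le_antisymm hu.1.2 hu.1.1

theorem posFn_apply_le_lengthInUpTo (c : RectCurve X x y) (A : Set X) (hs : s ∈ Icc 0 c.T) :
    posFn x y A (c.toFun s) ≤ c.lengthInUpTo A s :=
  iInf_le_of_le c <| iInf_le_of_le s <| iInf_le_of_le hs <| iInf_le _ rfl

theorem posFn_source_eq_zero (c : RectCurve X x y) (A : Set X) : posFn x y A x = 0 := by
  simpa [c.source, lengthInUpTo_zero] using
    c.posFn_apply_le_lengthInUpTo A ⟨le_rfl, c.T_nonneg⟩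

theorem le_posFn_add {A : Set X} {z : X} {a b : ℝ≥0∞}
    (h : ∀ (c' : RectCurve X x y) (σ : ℝ), σ ∈ Icc 0 c'.T → c'.toFun σ = z →
      a ≤ c'.lengthInUpTo A σ + b) :
    a ≤ posFn x y A z + b := by
  simp only [posFn, ENNReal.iInf_add]
  exact le_iInf₂ fun c' σ => le_iInf₂ fun hσ hz => h c' σ hσ hz

theorem posFn_apply_le_add (c : RectCurve X x y) (A : Set X) (hs : s ∈ Icc 0 c.T)
    (hss' : s ≤ s') (hs'T : s' ≤ c.T) :
    posFn x y A (c.toFun s') ≤ posFn x y A (c.toFun s) + volume (Icc s s' ∩ c.toFun ⁻¹' A) := by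
  refine le_posFn_add fun c' σ hσ hz => ?_
  have hmem : σ + (s' - s) ∈ Icc 0 (c'.glue c hσ hs hz).T :=
    ⟨by linarith [hσ.1], by simp only [glue]; linarith⟩
  calc posFn x y A (c.toFun s') = posFn x y A ((c'.glue c hσ hs hz).toFun (σ + (s' - s))) := by
        rw [glue_apply_add_sub hσ hs hz hss']
    _ ≤ (c'.glue c hσ hs hz).lengthInUpTo A (σ + (s' - s)) :=
      posFn_apply_le_lengthInUpTo _ A hmem
    _ ≤ _ := lengthInUpTo_glue_le hσ hs hz A hs'T

theorem width_le_posFn_add (c : RectCurve X x y) (A : Set X) (hs : s ∈ Icc 0 c.T) :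
    width x y A ≤ posFn x y A (c.toFun s) + volume (Icc s c.T ∩ c.toFun ⁻¹' A) :=
  le_posFn_add fun c' _ hσ hz =>
    (iInf_le _ (c'.glue c hσ hs hz)).trans (lengthInUpTo_glue_le hσ hs hz A le_rfl)

/-- At the last time `c` visits `A`, the position is at least the width of `A`. -/
theorem exists_width_le_posFn (c : RectCurve X x y) {A : Set X} (hA : IsClosed A)
    (hc : ∃ s ∈ Icc 0 c.T, c.toFun s ∈ A) :
    ∃ s ∈ Icc 0 c.T ∩ c.toFun ⁻¹' A, width x y A ≤ posFn x y A (c.toFun s) := by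
  set K := Icc 0 c.T ∩ c.toFun ⁻¹' A
  have hKbdd : BddAbove K := bddAbove_Icc.mono inter_subset_left
  have hlast : sSup K ∈ K := (c.isClosed_inter_preimage hA).csSup_mem hc hKbdd
  have htail : volume (Icc (sSup K) c.T ∩ c.toFun ⁻¹' A) = 0 := by
    refine measure_mono_null (fun u ⟨⟨hu, huT⟩, huA⟩ => ?_) (Real.volume_singleton (a := sSup K))
    exact le_antisymm (le_csSup hKbdd ⟨⟨hlast.1.1.trans hu, huT⟩, huA⟩) hu
  refine ⟨sSup K, hlast, ?_⟩
  simpa [htail] using c.width_le_posFn_add A hlast.1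

end RectCurve

theorem stmt8 {X : Type*} [MetricSpace X] (x y : X) (A : Set X) (hA : IsClosed A)
    (hsep : IsPathSep x y A) (t : ℝ≥0∞) (ht : t ≤ width x y A) :
    IsPathSep x y {z ∈ A | posFn x y A z = t} := by
  intro c
  obtain ⟨s, hs, hwidth⟩ := c.exists_width_le_posFn hA (hsep c)
  have hgrowth : ∀ s s', 0 ≤ s → s ≤ s' → s' ≤ c.T →
      posFn x y A (c.toFun s') ≤ posFn x y A (c.toFun s)
        + volume (Icc s s' ∩ (Icc 0 c.T ∩ c.toFun ⁻¹' A)) := fun s s' hs hss' hs'T =>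
    (c.posFn_apply_le_add A ⟨hs, hss'.trans hs'T⟩ hss' hs'T).trans <| add_le_add le_rfl <|
      measure_mono fun u ⟨hu, huA⟩ => ⟨hu, ⟨hs.trans hu.1, hu.2.trans hs'T⟩, huA⟩
  have hstart : posFn x y A (c.toFun 0) ≤ t := by
    rw [c.source, c.posFn_source_eq_zero]
    exact zero_le
  obtain ⟨s₀, ⟨hs₀, hs₀A⟩, hpos⟩ := exists_mem_eq_of_le_add_volume hgrowth
    (c.isClosed_inter_preimage hA) inter_subset_left hstart ⟨s, hs, ht.trans hwidth⟩
  exact ⟨s₀, hs₀, hs₀A, hpos⟩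
end

section
/- Let (X,d) be a rectifiable path connected metric space, x,y ∈ X, and A ⊆ X. If X is pointwise Λ_z-quasiconvex at z ∈ X, then the local Lipschitz constant of the position function pos_A at z satisfies lip(pos_A)(z) ≤ Λ_z. If moreover z lies outside the closure of A and X is pointwise quasiconvex, then lip(pos_A)(z) = 0. If X is Λ-quasiconvex, then pos_A is Λ-Lipschitz. -/
open MeasureTheory Metric Set Filter
open scoped ENNReal NNReal

/-!
Splicing a detour `d` from `z` to `w` and back into a curve from `x` to `y` through `z` shows
`pos_A(w) ≤ pos_A(z) + ℓ_A(d)`, where `ℓ_A(d)`, the length of `d` inside `A`, is at most the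
length of `d`. Short curves supplied by quasiconvexity therefore give the Lipschitz bounds, and
near a point outside `closure A` they miss `A` altogether, so `pos_A` is locally constant there.
-/

open Topology

theorem LipschitzOnWith.Icc_union_Icc_s9 {X : Type*} [PseudoMetricSpace X] {f : ℝ → X}
    {K : ℝ≥0} {a b c : ℝ} (hab : LipschitzOnWith K f (Icc a b))
    (hbc : LipschitzOnWith K f (Icc b c)) : LipschitzOnWith K f (Icc a c) := by
  have ordered : ∀ s ∈ Icc a c, ∀ t ∈ Icc a c, s ≤ t → dist (f s) (f t) ≤ K * (t - s) := by
    intro s hs t ht hst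
    have hdist : dist s t = t - s := by rw [Real.dist_eq, abs_sub_comm, abs_of_nonneg (by linarith)]
    rcases le_or_gt t b with htb | hbt
    · simpa [hdist] using hab.dist_le_mul s ⟨hs.1, hst.trans htb⟩ t ⟨ht.1, htb⟩
    rcases le_or_gt b s with hbs | hsb
    · simpa [hdist] using hbc.dist_le_mul s ⟨hbs, hs.2⟩ t ⟨hbs.trans hst, ht.2⟩
    have hb₁ : b ∈ Icc a b := ⟨hs.1.trans hsb.le, le_rfl⟩
    have hb₂ : b ∈ Icc b c := ⟨le_rfl, hbt.le.trans ht.2⟩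
    have h₁ := hab.dist_le_mul s ⟨hs.1, hsb.le⟩ b hb₁
    have h₂ := hbc.dist_le_mul b hb₂ t ⟨hbt.le, ht.2⟩
    rw [Real.dist_eq, abs_sub_comm, abs_of_nonneg (by linarith)] at h₁
    rw [Real.dist_eq, abs_sub_comm, abs_of_nonneg (by linarith)] at h₂
    calc dist (f s) (f t) ≤ dist (f s) (f b) + dist (f b) (f t) := dist_triangle _ _ _
      _ ≤ K * (b - s) + K * (t - b) := add_le_add h₁ h₂
      _ = K * (t - s) := by ring
  rw [lipschitzOnWith_iff_dist_le_mul]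
  intro s hs t ht
  rcases le_total s t with hst | hts
  · rw [Real.dist_eq, abs_sub_comm, abs_of_nonneg (by linarith)]
    exact ordered s hs t ht hst
  · rw [dist_comm, Real.dist_eq, abs_of_nonneg (by linarith)]
    exact ordered t ht s hs hts

namespace RectCurve

variable {X : Type*} [MetricSpace X] {x y z w : X}

theorem mapsTo_closedBall_source (c : RectCurve X x y) :
    MapsTo c.toFun (Icc 0 c.T) (closedBall x c.T) := fun t ht => by
  have h := c.lip.dist_le_mul t ht 0 ⟨le_rfl, c.T_nonneg⟩
  rw [c.source, Real.dist_eq, sub_zero, abs_of_nonneg ht.1, NNReal.coe_one, one_mul] at h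
  exact mem_closedBall.2 (h.trans ht.2)

theorem mapsTo_closedBall_target (c : RectCurve X x y) :
    MapsTo c.toFun (Icc 0 c.T) (closedBall y c.T) := fun t ht => by
  have h := c.lip.dist_le_mul t ht c.T ⟨c.T_nonneg, le_rfl⟩
  rw [c.target, Real.dist_eq, abs_sub_comm, abs_of_nonneg (by linarith [ht.2]),
    NNReal.coe_one, one_mul] at h
  exact mem_closedBall.2 (h.trans (by linarith [ht.1]))

noncomputable def trans (c₁ : RectCurve X x y) (c₂ : RectCurve X y z) : RectCurve X x z where
  T := c₁.T + c₂.T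
  T_nonneg := add_nonneg c₁.T_nonneg c₂.T_nonneg
  toFun t := if t ≤ c₁.T then c₁.toFun t else c₂.toFun (t - c₁.T)
  lip := by
    refine LipschitzOnWith.Icc_union_Icc_s9 (b := c₁.T) (fun a ha b hb => ?_) (fun a ha b hb => ?_)
    · simp only [if_pos ha.2, if_pos hb.2]
      exact c₁.lip ha hb
    · have hshift : ∀ t ∈ Icc c₁.T (c₁.T + c₂.T),
          (if t ≤ c₁.T then c₁.toFun t else c₂.toFun (t - c₁.T)) = c₂.toFun (t - c₁.T) := by
        intro t ht
        split_ifs with h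
        · rw [le_antisymm h ht.1, sub_self, c₁.target, c₂.source]
        · rfl
      have hmem : ∀ t ∈ Icc c₁.T (c₁.T + c₂.T), t - c₁.T ∈ Icc 0 c₂.T := fun t ht =>
        ⟨by linarith [ht.1], by linarith [ht.2]⟩
      rw [hshift a ha, hshift b hb]
      simpa [edist_sub_right] using c₂.lip (hmem a ha) (hmem b hb)
  source := by simp [c₁.T_nonneg, c₁.source]
  target := by
    rcases c₂.T_nonneg.eq_or_lt with h | h
    · simpa [← h, c₁.target, c₂.source] using c₂.target
    · simp [not_le.2 h, c₂.target]

theorem trans_apply_of_le (c₁ : RectCurve X x y) (c₂ : RectCurve X y z) {t : ℝ}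
    (ht : t ≤ c₁.T) : (c₁.trans c₂).toFun t = c₁.toFun t := if_pos ht

def symm (c : RectCurve X x y) : RectCurve X y x where
  T := c.T
  T_nonneg := c.T_nonneg
  toFun t := c.toFun (c.T - t)
  lip := fun a ha b hb => by
    simpa [edist_sub_left] using
      c.lip (show c.T - a ∈ Icc 0 c.T from ⟨by linarith [ha.2], by linarith [ha.1]⟩)
        (show c.T - b ∈ Icc 0 c.T from ⟨by linarith [hb.2], by linarith [hb.1]⟩)
  source := by simp [c.target]
  target := by simp [c.source]

def dropUntil (c : RectCurve X x y) (s : ℝ) (hs : s ∈ Icc 0 c.T) (hz : c.toFun s = z) :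
    RectCurve X z y where
  T := c.T - s
  T_nonneg := sub_nonneg.2 hs.2
  toFun t := c.toFun (t + s)
  lip := fun a ha b hb => by
    simpa [edist_add_right] using
      c.lip (show a + s ∈ Icc 0 c.T from ⟨by linarith [ha.1, hs.1], by linarith [ha.2]⟩)
        (show b + s ∈ Icc 0 c.T from ⟨by linarith [hb.1, hs.1], by linarith [hb.2]⟩)
  source := by simp [hz]
  target := by simp [c.target]

def takeUntil (c : RectCurve X x y) (s : ℝ) (hs : s ∈ Icc 0 c.T) (hz : c.toFun s = z) :
    RectCurve X x z where
  T := s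
  T_nonneg := hs.1
  toFun := c.toFun
  lip := c.lip.mono (Icc_subset_Icc le_rfl hs.2)
  source := c.source
  target := hz

variable (A : Set X)

theorem lengthInUpTo_of_le (c : RectCurve X x y) {s : ℝ} (hs : s ≤ c.T) :
    c.lengthInUpTo A s = volume {t | t ∈ Icc 0 s ∧ c.toFun t ∈ A} := by
  rw [lengthInUpTo, min_eq_left hs]

theorem lengthIn_eq (c : RectCurve X x y) :
    c.lengthIn A = volume {t | t ∈ Icc 0 c.T ∧ c.toFun t ∈ A} :=
  c.lengthInUpTo_of_le A le_rfl

theorem lengthIn_le (c : RectCurve X x y) : c.lengthIn A ≤ ENNReal.ofReal c.T := by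
  rw [lengthIn_eq, ← sub_zero c.T, ← Real.volume_Icc, sub_zero]
  exact measure_mono fun t ht => ht.1

theorem lengthIn_eq_zero_of_mapsTo (c : RectCurve X x y) {S : Set X}
    (hc : MapsTo c.toFun (Icc 0 c.T) S) (hS : Disjoint S A) : c.lengthIn A = 0 := by
  rw [lengthIn_eq, ← measure_empty (μ := (volume : Measure ℝ))]
  congr 1
  exact eq_empty_of_forall_notMem fun t ht => hS.notMem_of_mem_left (hc ht.1) ht.2

theorem lengthIn_takeUntil (c : RectCurve X x y) {s : ℝ} (hs : s ∈ Icc 0 c.T)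
    (hz : c.toFun s = z) : (c.takeUntil s hs hz).lengthIn A = c.lengthInUpTo A s := by
  rw [lengthIn_eq, c.lengthInUpTo_of_le A hs.2]
  rfl

theorem lengthInUpTo_trans (c₁ : RectCurve X x y) (c₂ : RectCurve X y z) :
    (c₁.trans c₂).lengthInUpTo A c₁.T = c₁.lengthIn A := by
  rw [lengthInUpTo_of_le _ _ (le_add_of_nonneg_right c₂.T_nonneg), lengthIn_eq]
  congr 1
  ext t
  simp only [mem_ofPred_eq, and_congr_right_iff]
  intro ht
  rw [trans_apply_of_le _ _ ht.2]

theorem lengthIn_trans_le (c₁ : RectCurve X x y) (c₂ : RectCurve X y z) :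
    (c₁.trans c₂).lengthIn A ≤ c₁.lengthIn A + c₂.lengthIn A := by
  rw [lengthIn_eq, lengthIn_eq, lengthIn_eq,
    ← measure_preimage_add_right volume (-c₁.T) {t | t ∈ Icc 0 c₂.T ∧ c₂.toFun t ∈ A}]
  refine (measure_mono (μ := volume) ?_).trans (measure_union_le _ _)
  rintro t ⟨ht, htA⟩
  by_cases h : t ≤ c₁.T
  · rw [trans_apply_of_le _ _ h] at htA
    exact Or.inl ⟨⟨ht.1, h⟩, htA⟩
  · refine Or.inr ⟨⟨by linarith, by simp only [trans] at ht; linarith [ht.2]⟩, ?_⟩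
    simpa [trans, h, sub_eq_add_neg] using htA

end RectCurve

section PositionFunction

open RectCurve

variable {X : Type*} [MetricSpace X] {x y z w : X} {A : Set X}

theorem posFn_le_lengthIn (c₁ : RectCurve X x w) (c₂ : RectCurve X w y) :
    posFn x y A w ≤ c₁.lengthIn A := by
  have hT : c₁.T ∈ Icc 0 (c₁.trans c₂).T := ⟨c₁.T_nonneg, le_add_of_nonneg_right c₂.T_nonneg⟩
  have hw : (c₁.trans c₂).toFun c₁.T = w := by rw [trans_apply_of_le _ _ le_rfl, c₁.target]
  rw [← lengthInUpTo_trans A c₁ c₂]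
  exact iInf_le_of_le (c₁.trans c₂) (iInf_le_of_le c₁.T (iInf₂_le hT hw))

theorem posFn_ne_top (hrc : ∀ a b : X, Nonempty (RectCurve X a b)) (p : X) :
    posFn x y A p ≠ ⊤ := by
  obtain ⟨c₁⟩ := hrc x p
  obtain ⟨c₂⟩ := hrc p y
  exact ne_top_of_le_ne_top ENNReal.ofReal_ne_top
    ((posFn_le_lengthIn c₁ c₂).trans (c₁.lengthIn_le A))

/-- The curve realising the bound runs along `c` to `z`, out to `w` along `d`, back along `d`,
and on along `c` to `y`. -/
theorem posFn_le_add_lengthIn (d : RectCurve X z w) :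
    posFn x y A w ≤ posFn x y A z + d.lengthIn A := by
  simp_rw [posFn, ENNReal.iInf_add]
  refine le_iInf fun c => le_iInf fun s => le_iInf fun hs => le_iInf fun hz => ?_
  calc posFn x y A w
      ≤ ((c.takeUntil s hs hz).trans d).lengthIn A :=
        posFn_le_lengthIn _ (d.symm.trans (c.dropUntil s hs hz))
    _ ≤ (c.takeUntil s hs hz).lengthIn A + d.lengthIn A := lengthIn_trans_le A _ _
    _ = c.lengthInUpTo A s + d.lengthIn A := by rw [lengthIn_takeUntil]

theorem abs_toReal_posFn_sub_le (hrc : ∀ a b : X, Nonempty (RectCurve X a b))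
    (d : RectCurve X z w) :
    |(posFn x y A w).toReal - (posFn x y A z).toReal| ≤ d.T := by
  have one_sided : ∀ {a b : X} (c : RectCurve X a b),
      (posFn x y A b).toReal ≤ (posFn x y A a).toReal + c.T := fun c => by
    have h := ENNReal.toReal_le_add ((posFn_le_add_lengthIn (x := x) (y := y) c).trans
      (add_le_add_right (c.lengthIn_le A) _)) (posFn_ne_top hrc _) ENNReal.ofReal_ne_top
    rwa [ENNReal.toReal_ofReal c.T_nonneg] at h
  rw [abs_sub_le_iff]
  exact ⟨by linarith [one_sided d], by linarith [one_sided d.symm, show d.symm.T = d.T from rfl]⟩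

theorem posFn_eventually_eq_of_notMem_closure (hz : z ∉ closure A) {r Λ : ℝ} (hr : 0 < r)
    (hq : ∀ w ∈ ball z r, ∃ c : RectCurve X z w, c.T ≤ Λ * dist z w) :
    ∀ᶠ w in 𝓝 z, posFn x y A w = posFn x y A z := by
  obtain ⟨ε, hε, hball⟩ := Metric.mem_nhds_iff.1 (isClosed_closure.isOpen_compl.mem_nhds hz)
  have hshort : ∀ᶠ w in 𝓝 z, Λ * dist z w < ε := by
    have h := ((continuous_const.mul (continuous_const.dist continuous_id)).tendsto z).eventually
      (gt_mem_nhds (show Λ * dist z z < ε by simpa using hε))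
    simpa using h
  filter_upwards [ball_mem_nhds z hr, hshort] with w hw hwε
  obtain ⟨d, hd⟩ := hq w hw
  have hdisj : Disjoint (closedBall z d.T) A :=
    Disjoint.mono_left ((closedBall_subset_ball (hd.trans_lt hwε)).trans hball)
      (disjoint_compl_left.mono_left (compl_subset_compl.2 subset_closure))
  have h₁ := posFn_le_add_lengthIn (x := x) (y := y) (A := A) d
  have h₂ := posFn_le_add_lengthIn (x := x) (y := y) (A := A) d.symm
  rw [d.lengthIn_eq_zero_of_mapsTo A d.mapsTo_closedBall_source hdisj, add_zero] at h₁
  rw [d.symm.lengthIn_eq_zero_of_mapsTo A d.symm.mapsTo_closedBall_target hdisj, add_zero] at h₂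
  exact le_antisymm h₁ h₂

end PositionFunction

theorem lipConst_le_ofReal {X : Type*} [MetricSpace X] {u : X → ℝ} {z : X} {K : ℝ}
    (h : ∀ᶠ w in 𝓝 z, |u w - u z| ≤ K * dist w z) : lipConst u z ≤ ENNReal.ofReal K := by
  refine limsup_le_of_le (by isBoundedDefault) ?_
  filter_upwards [nhdsWithin_le_nhds h, self_mem_nhdsWithin] with w hw hwz
  exact ENNReal.ofReal_le_ofReal ((div_le_iff₀ (dist_pos.2 hwz)).2 hw)

theorem lipConst_eq_zero_of_eventually_eq {X : Type*} [MetricSpace X] {u : X → ℝ} {z : X}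
    (h : ∀ᶠ w in 𝓝 z, u w = u z) : lipConst u z = 0 :=
  nonpos_iff_eq_zero.1 <| by
    simpa using lipConst_le_ofReal (K := 0) (h.mono fun w hw => by simp [hw])

theorem stmt9 {X : Type*} [MetricSpace X]
    (hrc : ∀ a b : X, Nonempty (RectCurve X a b))
    (x y : X) (A : Set X) :
    (∀ (z : X) (Λ : ℝ), 1 ≤ Λ →
        (∃ r > 0, ∀ w ∈ Metric.ball z r, ∃ c : RectCurve X z w, c.T ≤ Λ * dist z w) →
        lipConst (fun p => (posFn x y A p).toReal) z ≤ ENNReal.ofReal Λ) ∧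
    (∀ z : X, z ∉ closure A →
        (∀ p : X, ∃ r > 0, ∃ Λ : ℝ, 1 ≤ Λ ∧
          ∀ w ∈ Metric.ball p r, ∃ c : RectCurve X p w, c.T ≤ Λ * dist p w) →
        lipConst (fun p => (posFn x y A p).toReal) z = 0) ∧
    (∀ Λ : ℝ≥0, 1 ≤ Λ →
        (∀ a b : X, ∃ c : RectCurve X a b, (c.T : ℝ) ≤ Λ * dist a b) →
        LipschitzWith Λ (fun p => (posFn x y A p).toReal)) := by
  refine ⟨fun z Λ _ ⟨r, hr, hq⟩ => ?_, fun z hz hq => ?_, fun Λ _ hq => ?_⟩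
  · refine lipConst_le_ofReal ?_
    filter_upwards [ball_mem_nhds z hr] with w hw
    obtain ⟨d, hd⟩ := hq w hw
    rw [dist_comm w z]
    exact (abs_toReal_posFn_sub_le hrc d).trans hd
  · obtain ⟨r, hr, Λ, -, hqz⟩ := hq z
    exact lipConst_eq_zero_of_eventually_eq <|
      (posFn_eventually_eq_of_notMem_closure hz hr hqz).mono fun w hw => congrArg _ hw
  · refine LipschitzWith.of_dist_le_mul fun a b => ?_
    obtain ⟨d, hd⟩ := hq b a
    rw [Real.dist_eq, dist_comm a b]
    exact (abs_toReal_posFn_sub_le hrc d).trans hd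
end

section
/- Let (V,E,μ) be a measure graph (countable graph with a weight μ: V → (0,∞) extended by summation to a measure on subsets) and v,w ∈ V. Then the infimum over all subsets A ⊆ V of the discrete separating ratio μ(A)/disc-width_{v,w}(A) equals the infimum over all discrete separating sets A between v and w of μ(A). -/
open scoped ENNReal

noncomputable section

namespace DiscPaper

variable {V : Type*}

/-- Number of distinct vertices of the walk `c` lying in `A`. -/
def interCount (G : SimpleGraph V) {v w : V} (c : G.Walk v w) (A : Set V) : ℕ :=
  ({q | q ∈ c.support} ∩ A).ncard

/-- Discrete width of `A` between `v` and `w`: infimum over walks from `v` to `w`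
of the number of vertices of the walk lying in `A` (`⊤` if there is no walk). -/
def discWidth (G : SimpleGraph V) (v w : V) (A : Set V) : ℝ≥0∞ :=
  ⨅ c : G.Walk v w, (interCount G c A : ℝ≥0∞)

/-- `A` is a discrete separating set between `v` and `w`: every walk from `v`
to `w` meets `A`. -/
def IsDiscSep (G : SimpleGraph V) (v w : V) (A : Set V) : Prop :=
  ∀ c : G.Walk v w, ∃ q ∈ c.support, q ∈ A

/-- The discrete position function: minimum, over walks `c` from `v` to `w`
passing through `z`, of the number of points of `A` met along `c` up to and
including the first occurrence of `z` (`⊤` if no walk passes through `z`). -/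
def posA (G : SimpleGraph V) (v w : V) (A : Set V) (z : V) : ℝ≥0∞ :=
  ⨅ (c : G.Walk v w) (i : Fin c.support.length) (_ : c.support.get i = z),
    (({q | q ∈ c.support.take (↑i + 1)} ∩ A).ncard : ℝ≥0∞)

/-- The measure of a set of vertices, given a weight function on vertices. -/
def muSet (μ : V → ℝ≥0∞) (A : Set V) : ℝ≥0∞ := ∑' q : A, μ q

/-- Discrete separating ratio, with the conventions that it is `⊤` when the
width is `0`, and `0` when the width is `⊤` (no walk exists). -/
def discSR (G : SimpleGraph V) (v w : V) (μ : V → ℝ≥0∞) (A : Set V) : ℝ≥0∞ :=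
  if discWidth G v w A = 0 then ⊤ else muSet μ A / discWidth G v w A

/-- A slim separating set: a discrete separating set such that every point of
`A` is the first intersection point with `A` of some walk from `v` to `w`. -/
def Slim (G : SimpleGraph V) (v w : V) (A : Set V) : Prop :=
  IsDiscSep G v w A ∧
    ∀ z ∈ A, ∃ (c : G.Walk v w) (i : Fin c.support.length),
      c.support.get i = z ∧ ∀ j : Fin c.support.length, j < i → c.support.get j ∉ A

end DiscPaper

end

/-!
A separating set has width at least one, so its ratio is at most its measure. Conversely, if
`A` has width `n`, write `d z` for the width of `A` between `v` and `z`. Along a walk `d` grows by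
at most one per step, and only at points of `A`; hence every walk from `v` to `w` crosses each
level set `A_i = {z ∈ A | d z = i}`, `1 ≤ i ≤ n`. These `n` disjoint separating subsets of `A`
cannot all have measure above `μ(A) / n`.
-/

namespace DiscPaper

open SimpleGraph Function

variable {V : Type*} {G : SimpleGraph V} {A : Set V} {v w : V}

lemma interCount_nil (u : V) : interCount G (Walk.nil : G.Walk u u) A = ({u} ∩ A).ncard := by
  simp [interCount]

lemma interCount_concat_le {u u' : V} (c : G.Walk v u) (h : G.Adj u u') :
    interCount G (c.concat h) A ≤ interCount G c A + ({u'} ∩ A).ncard := by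
  have hsupp : {q | q ∈ (c.concat h).support} = {q | q ∈ c.support} ∪ {u'} := by
    ext q
    simp [Walk.support_concat, or_comm]
  rw [interCount, hsupp, Set.union_inter_distrib_right]
  exact Set.ncard_union_le _ _

lemma one_le_discWidth (hA : IsDiscSep G v w A) : 1 ≤ discWidth G v w A := by
  refine le_iInf fun c => ?_
  obtain ⟨q, hq, hqA⟩ := hA c
  exact_mod_cast (Set.ncard_pos (c.support.finite_toSet.inter_of_left A)).2 ⟨q, hq, hqA⟩

lemma discWidth_eq_top [IsEmpty (G.Walk v w)] : discWidth G v w A = ⊤ :=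
  iInf_of_empty _

lemma exists_discWidth_eq_interCount (G : SimpleGraph V) (v w : V) (A : Set V)
    [Nonempty (G.Walk v w)] :
    ∃ c : G.Walk v w, discWidth G v w A = interCount G c A := by
  let f := fun c : G.Walk v w => interCount G c A
  refine ⟨Function.argmin f, le_antisymm (iInf_le _ _) (le_iInf fun c => ?_)⟩
  exact_mod_cast Function.argmin_le f c

lemma discWidth_le_of_adj {u u' : V} (h : G.Adj u u') :
    discWidth G v u' A ≤ discWidth G v u A + ({u'} ∩ A).ncard := by
  rw [discWidth, discWidth, ENNReal.iInf_add]
  refine le_iInf fun c => (iInf_le _ (c.concat h)).trans ?_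
  exact_mod_cast interCount_concat_le c h

/-- The level set `A_i`: the paper's position `pos_A z` is taken to be the width of `A`
between `v` and `z`. -/
def widthLevel (G : SimpleGraph V) (v : V) (A : Set V) (i : ℕ) : Set V :=
  {z ∈ A | discWidth G v z A = i}

lemma widthLevel_subset (i : ℕ) : widthLevel G v A i ⊆ A := fun _ hz => hz.1

lemma pairwise_disjoint_widthLevel : Pairwise (Disjoint on widthLevel G v A) := by
  intro i j hij
  refine Set.disjoint_left.2 fun z hi hj => hij ?_
  exact_mod_cast hi.2.symm.trans hj.2

lemma discWidth_self_le (v : V) : discWidth G v v A ≤ ({v} ∩ A).ncard :=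
  (iInf_le _ Walk.nil).trans_eq (by rw [interCount_nil])

lemma mem_widthLevel_self {i : ℕ} (hi : 1 ≤ i) (hv : (i : ℝ≥0∞) ≤ discWidth G v v A) :
    v ∈ widthLevel G v A i := by
  have hle := discWidth_self_le (G := G) (A := A) v
  have hvA : v ∈ A := by
    by_contra hvA
    rw [Set.singleton_inter_eq_empty.2 hvA, Set.ncard_empty, Nat.cast_zero] at hle
    exact (hv.trans hle).not_gt (by exact_mod_cast hi)
  have hvi : discWidth G v v A ≤ i :=
    hle.trans (by exact_mod_cast (Set.ncard_singleton_inter v A).trans hi)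
  exact ⟨hvA, le_antisymm hvi hv⟩

lemma mem_widthLevel_of_adj {i : ℕ} {u u' : V} (h : G.Adj u u')
    (hu : discWidth G v u A < i) (hu' : (i : ℝ≥0∞) ≤ discWidth G v u' A) :
    u' ∈ widthLevel G v A i := by
  cases isEmpty_or_nonempty (G.Walk v u) with
  | inl _ =>
    rw [discWidth_eq_top] at hu
    exact absurd hu not_top_lt
  | inr _ =>
    obtain ⟨d, hd⟩ := exists_discWidth_eq_interCount G v u A
    rw [hd, Nat.cast_lt] at hu
    have hstep := discWidth_le_of_adj (v := v) (A := A) h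
    rw [hd] at hstep
    have hu'A : u' ∈ A := by
      by_contra hu'A
      rw [Set.singleton_inter_eq_empty.2 hu'A, Set.ncard_empty, Nat.cast_zero, add_zero] at hstep
      exact (hu'.trans hstep).not_gt (by exact_mod_cast hu)
    have hu'i : discWidth G v u' A ≤ i := by
      have := Set.ncard_singleton_inter u' A
      exact hstep.trans (by exact_mod_cast (by omega : interCount G d A + ({u'} ∩ A).ncard ≤ i))
    exact ⟨hu'A, le_antisymm hu'i hu'⟩

lemma exists_mem_support_widthLevel {i : ℕ} (hi : 1 ≤ i) {u : V} (c : G.Walk v u)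
    (hu : (i : ℝ≥0∞) ≤ discWidth G v u A) : ∃ z ∈ c.support, z ∈ widthLevel G v A i := by
  suffices ∀ {s u : V} (c : G.Walk s u), s = v → (i : ℝ≥0∞) ≤ discWidth G v u A →
      ∃ z ∈ c.support, z ∈ widthLevel G v A i from this c rfl hu
  intro s u c
  induction c using Walk.concatRec with
  | @Hnil s =>
    rintro rfl hs
    exact ⟨s, Walk.start_mem_support _, mem_widthLevel_self hi hs⟩
  | @Hconcat s u u' c h ih =>
    rintro rfl hu'
    rcases le_or_gt (i : ℝ≥0∞) (discWidth G s u A) with hu | hu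
    · obtain ⟨z, hz, hzi⟩ := ih rfl hu
      exact ⟨z, by simp [Walk.support_concat, hz], hzi⟩
    · exact ⟨u', by simp [Walk.support_concat], mem_widthLevel_of_adj h hu hu'⟩

lemma isDiscSep_widthLevel {i : ℕ} (hi : 1 ≤ i) (hiw : (i : ℝ≥0∞) ≤ discWidth G v w A) :
    IsDiscSep G v w (widthLevel G v A i) :=
  fun c => exists_mem_support_widthLevel hi c hiw

lemma sum_muSet_le_of_pairwise_disjoint {ι : Type*} (μ : V → ℝ≥0∞) {s : Finset ι}
    {t : ι → Set V} (hd : (s : Set ι).Pairwise (Disjoint on t)) (ht : ∀ i ∈ s, t i ⊆ A) :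
    ∑ i ∈ s, muSet μ (t i) ≤ muSet μ A := by
  simp only [muSet]
  rw [← Summable.tsum_finset_bUnion_disjoint hd fun _ _ => ENNReal.summable]
  exact ENNReal.tsum_mono_subtype μ (Set.iUnion₂_subset ht)

lemma exists_isDiscSep_muSet_le_div (μ : V → ℝ≥0∞) {n : ℕ} (hn : n ≠ 0)
    (hnw : (n : ℝ≥0∞) ≤ discWidth G v w A) :
    ∃ B, IsDiscSep G v w B ∧ muSet μ B ≤ muSet μ A / n := by
  have hsum : ∑ i ∈ Finset.Icc 1 n, muSet μ (widthLevel G v A i)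
      ≤ ∑ _i ∈ Finset.Icc 1 n, muSet μ A / n := by
    rw [Finset.sum_const, Nat.card_Icc, Nat.add_sub_cancel, nsmul_eq_mul,
      ENNReal.mul_div_cancel (by exact_mod_cast hn) (ENNReal.natCast_ne_top n)]
    exact sum_muSet_le_of_pairwise_disjoint μ (pairwise_disjoint_widthLevel.set_pairwise _)
      fun i _ => widthLevel_subset i
  obtain ⟨i, hi, hle⟩ := ENNReal.exists_le_of_sum_le ⟨1, by simp [Nat.one_le_iff_ne_zero, hn]⟩ hsum
  rw [Finset.mem_Icc] at hi
  exact ⟨_, isDiscSep_widthLevel hi.1 ((Nat.cast_le.2 hi.2).trans hnw), hle⟩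

lemma discSR_le_muSet (μ : V → ℝ≥0∞) (hA : IsDiscSep G v w A) :
    discSR G v w μ A ≤ muSet μ A := by
  have hw := one_le_discWidth hA
  rw [discSR, if_neg (one_pos.trans_le hw).ne']
  exact (ENNReal.div_le_div_left hw _).trans_eq (div_one _)

lemma iInf_muSet_le_discSR (μ : V → ℝ≥0∞) (A : Set V) :
    ⨅ (B : Set V) (_ : IsDiscSep G v w B), muSet μ B ≤ discSR G v w μ A := by
  cases isEmpty_or_nonempty (G.Walk v w) with
  | inl hempty =>
    refine (iInf₂_le ∅ fun c => isEmptyElim c).trans ?_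
    simp [muSet]
  | inr hne =>
    obtain ⟨c, hc⟩ := exists_discWidth_eq_interCount G v w A
    rcases Nat.eq_zero_or_pos (interCount G c A) with h0 | hpos
    · simp [discSR, hc, h0]
    obtain ⟨B, hB, hle⟩ := exists_isDiscSep_muSet_le_div μ hpos.ne' hc.ge
    rw [discSR, if_neg (by simp [hc, hpos.ne']), hc]
    exact (iInf₂_le B hB).trans hle

end DiscPaper

theorem stmt15_general {V : Type*} (G : SimpleGraph V) (v w : V) (μ : V → ℝ≥0∞) :
    (⨅ A : Set V, DiscPaper.discSR G v w μ A) =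
      ⨅ (A : Set V) (_ : DiscPaper.IsDiscSep G v w A), DiscPaper.muSet μ A :=
  le_antisymm
    (le_iInf₂ fun A hA => (iInf_le _ A).trans (DiscPaper.discSR_le_muSet μ hA))
    (le_iInf fun A => DiscPaper.iInf_muSet_le_discSR μ A)

theorem stmt15 {V : Type*} [Countable V] (G : SimpleGraph V) (v w : V)
    (μ : V → ℝ≥0∞) (hpos : ∀ q, 0 < μ q) (hfin : ∀ q, μ q ≠ ⊤) :
    (⨅ A : Set V, DiscPaper.discSR G v w μ A) =
      ⨅ (A : Set V) (_ : DiscPaper.IsDiscSep G v w A), DiscPaper.muSet μ A :=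
  stmt15_general G v w μ
end
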